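/- arXiv:1504.07441 — 6 statements merged into one kernel-verified Lean document; each statement's English description precedes it below -/
import Mathlib

section
/- Occ(m,n,1) ≥ m(n−1): there exists a set A of functions from an m-element set to an n-element set, of size m(n−1), such that each function in A is uniquely determined among elements of A by its value at a single point. -/
/-!
Fix `y₀ : Y` and take the functions that are constantly `y₀` except for a single point `x`,
where they take a value `y ≠ y₀`; there are `m (n - 1)` of them. Such a function is the only
one of the family whose value at `x` is `y`, since every other member is `y₀` at `x` unless its
exceptional point is `x` too, and then its exceptional value must be `y`.
-/

open Function Finset

section Spikes

variable {X Y : Type*} [DecidableEq X]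

lemma eq_of_update_const_apply_eq {y₀ y y' : Y} (hy : y ≠ y₀) {x x' : X}
    (h : update (const X y₀) x' y' x = update (const X y₀) x y x) : (x', y') = (x, y) := by
  rw [update_self] at h
  by_cases hx : x = x'
  · subst hx
    rw [update_self] at h
    rw [h]
  · rw [update_of_ne hx] at h
    exact absurd h.symm hy

variable [Fintype X] [Fintype Y] [DecidableEq Y]

def spikes (y₀ : Y) : Finset (X → Y) :=
  (univ ×ˢ ({y₀}ᶜ : Finset Y)).image fun p => update (const X y₀) p.1 p.2

lemma card_spikes (y₀ : Y) :
    (spikes y₀ : Finset (X → Y)).card = Fintype.card X * (Fintype.card Y - 1) := by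
  rw [spikes, card_image_of_injOn, card_product, card_univ, card_compl, card_singleton]
  rintro ⟨x, y⟩ hp ⟨x', y'⟩ _ h
  have hy : y ≠ y₀ := by simpa using hp
  exact (eq_of_update_const_apply_eq hy (congrFun h x).symm).symm

lemma exists_eq_of_apply_eq_of_mem_spikes {y₀ : Y} {f : X → Y} (hf : f ∈ spikes y₀) :
    ∃ x, ∀ g ∈ spikes y₀, g x = f x → g = f := by
  obtain ⟨⟨x, y⟩, hp, rfl⟩ := mem_image.mp hf
  have hy : y ≠ y₀ := by simpa using hp
  refine ⟨x, fun g hg hgx => ?_⟩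
  obtain ⟨⟨x', y'⟩, -, rfl⟩ := mem_image.mp hg
  cases eq_of_update_const_apply_eq hy hgx
  rfl

end Spikes

theorem stmt3_general {X Y : Type*} [Fintype X] [Fintype Y]
    (m n : ℕ) (hm : Fintype.card X = m) (hn : Fintype.card Y = n) :
    ∃ A : Finset (X → Y), A.card = m * (n - 1) ∧
      ∀ f ∈ A, ∃ x : X, ∀ g ∈ A, g x = f x → g = f := by
  classical
  subst hm hn
  cases isEmpty_or_nonempty Y with
  | inl hY => exact ⟨∅, by simp, by simp⟩
  | inr hY =>
    obtain ⟨y₀⟩ := hY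
    exact ⟨spikes y₀, card_spikes y₀, fun f hf => exists_eq_of_apply_eq_of_mem_spikes hf⟩

/-- `Occ(m,n,1) ≥ m(n-1)`: there is a set `A` of functions from an
`m`-element set to an `n`-element set, of size `m(n-1)`, such that each function in `A` is
uniquely determined among elements of `A` by its value at a single point. -/
theorem stmt3 {X Y : Type*} [Fintype X] [Fintype Y] [DecidableEq X] [DecidableEq Y]
    (m n : ℕ) (hm : Fintype.card X = m) (hn : Fintype.card Y = n) :
    ∃ A : Finset (X → Y), A.card = m * (n - 1) ∧
      ∀ f ∈ A, ∃ x : X, ∀ g ∈ A, g x = f x → g = f :=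
  stmt3_general m n hm hn
end

section
/- Let A be a set of functions from an m-element set X to an n-element set Y such that every f ∈ A has radius at most r (with the equality order). Then there exists an r-element subset S₀ ⊆ X such that the number of functions in A that are uniquely determined among A by their restriction to S₀ is at least |A| / C(m,r). -/
/-!
Enlarge an Occam set of each `f ∈ A` to exactly `r` points; supersets of Occam sets are Occam.
Every `f` is then counted for at least one of the `C(m,r)` subsets of size `r`, so by double
counting some `r`-subset is Occam for at least `|A| / C(m,r)` of the functions.
-/

open Finset

namespace Finset

theorem exists_card_le_card_filter_mul {α β : Type*} {s : Finset α} {t : Finset β}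
    {p : α → β → Prop} [∀ a b, Decidable (p a b)] (ht : t.Nonempty)
    (hs : ∀ a ∈ s, ∃ b ∈ t, p a b) : ∃ b ∈ t, #s ≤ #{a ∈ s | p a b} * #t := by
  have hcover : #s ≤ ∑ b ∈ t, #{a ∈ s | p a b} := by
    calc #s = ∑ _a ∈ s, 1 := card_eq_sum_ones s
      _ ≤ ∑ a ∈ s, #{b ∈ t | p a b} := sum_le_sum fun a ha =>
          card_pos.2 <| by simpa [Finset.Nonempty] using hs a ha
      _ = ∑ b ∈ t, #{a ∈ s | p a b} := sum_card_bipartiteAbove_eq_sum_card_bipartiteBelow p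
  refine exists_le_of_sum_le ht ?_
  rw [sum_const, smul_eq_mul, ← sum_mul, mul_comm]
  exact Nat.mul_le_mul_right _ hcover

end Finset

section Occam

variable {X Y : Type*}

def IsOccam (A : Finset (X → Y)) (f : X → Y) (S : Finset X) : Prop :=
  ∀ g ∈ A, (∀ x ∈ S, g x = f x) → g = f

theorem IsOccam.mono {A : Finset (X → Y)} {f : X → Y} {S T : Finset X}
    (h : IsOccam A f S) (hST : S ⊆ T) : IsOccam A f T :=
  fun g hg hgT => h g hg fun x hx => hgT x (hST hx)

theorem IsOccam.exists_card_eq [Fintype X] {A : Finset (X → Y)} {f : X → Y} {S : Finset X}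
    {r : ℕ} (h : IsOccam A f S) (hS : #S ≤ r) (hr : r ≤ Fintype.card X) :
    ∃ T : Finset X, #T = r ∧ IsOccam A f T := by
  classical
  obtain ⟨T, hST, hT⟩ := exists_superset_card_eq hS hr
  exact ⟨T, hT, h.mono hST⟩

end Occam

/-- If every `f ∈ A` has radius at most `r` (equality order, `|X| = m`,
`r ≤ m`), then some `r`-element subset `S₀ ⊆ X` has the property that the number of
functions in `A` uniquely determined among `A` by their restriction to `S₀` is at least
`|A| / C(m,r)` (stated multiplicatively to avoid division). -/
theorem stmt4 {X Y : Type*} [Fintype X] [Fintype Y] [DecidableEq X] [DecidableEq Y]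
    (m r : ℕ) (hm : Fintype.card X = m) (hr : r ≤ m) (A : Finset (X → Y))
    (hA : ∀ f ∈ A, ∃ S : Finset X, S.card ≤ r ∧
      ∀ g ∈ A, (∀ x ∈ S, g x = f x) → g = f) :
    ∃ S₀ : Finset X, S₀.card = r ∧
      A.card ≤ (A.filter (fun f => ∀ g ∈ A, (∀ x ∈ S₀, g x = f x) → g = f)).card *
        Nat.choose m r := by
  subst hm
  have hOccam : ∀ f ∈ A, ∃ S ∈ (univ : Finset X).powersetCard r,
      ∀ g ∈ A, (∀ x ∈ S, g x = f x) → g = f := by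
    intro f hf
    obtain ⟨S, hS, hSA⟩ := hA f hf
    obtain ⟨T, hT, hTA⟩ := IsOccam.exists_card_eq hSA hS hr
    exact ⟨T, mem_powersetCard_univ.2 hT, hTA⟩
  obtain ⟨S₀, hS₀, hcount⟩ :=
    exists_card_le_card_filter_mul (powersetCard_nonempty.2 (by simpa using hr)) hOccam
  refine ⟨S₀, mem_powersetCard_univ.1 hS₀, ?_⟩
  simpa [card_powersetCard] using hcount
end

section
/- Occ(3,n,2) ≥ 4·C(n,2) + n: there exists a set A of functions from a 3-element set to an n-element set, of cardinality 4·C(n,2) + n, such that each f ∈ A is uniquely determined among elements of A by its values on some 2-element subset of the domain. (Construction: for each unordered pair {u,v} of letters take the words uvu, vuv, uuv, vvu, plus the n constant words.) -/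
/-!
Take the words `w₁w₂w₃` with `w₁ = w₂` or `w₁ = w₃`: the `n²` words `u u v` and the
`n(n - 1)` words `u v u` with `u ≠ v`, that is `4·C(n,2) + n` words. Within this family a
constant word is determined by `w₂, w₃`, since `w₁` must repeat one of them; a word with
`w₂ ≠ w₃` is determined by position 1 and the position whose letter differs from `w₁`,
since the remaining position must then repeat `w₁`.
-/

open Finset Function

section

variable {X Y : Type*} {a b c : X}

theorem eq_of_eq_at_three (hX : ∀ x, x = a ∨ x = b ∨ x = c) {f g : X → Y}
    (ha : g a = f a) (hb : g b = f b) (hc : g c = f c) : g = f := by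
  funext x
  rcases hX x with rfl | rfl | rfl <;> assumption

theorem exists_occam_pair [DecidableEq X] (hab : a ≠ b) (hac : a ≠ c) (hbc : b ≠ c)
    (hX : ∀ x, x = a ∨ x = b ∨ x = c) {A : Set (X → Y)}
    (hA : ∀ g ∈ A, g a = g b ∨ g a = g c) {f : X → Y} (hf : f ∈ A) :
    ∃ S : Finset X, S.card = 2 ∧ ∀ g ∈ A, (∀ x ∈ S, g x = f x) → g = f := by
  have hfA := hA f hf
  by_cases hfbc : f b = f c
  · refine ⟨{b, c}, card_pair hbc, fun g hg hS => ?_⟩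
    have hgb := hS b (by simp)
    have hgc := hS c (by simp)
    have hga : g a = f a := by grind
    exact eq_of_eq_at_three hX hga hgb hgc
  rcases hfA with hfab | hfac
  · refine ⟨{a, c}, card_pair hac, fun g hg hS => ?_⟩
    have hga := hS a (by simp)
    have hgc := hS c (by simp)
    have hgb : g b = f b := by grind
    exact eq_of_eq_at_three hX hga hgb hgc
  · refine ⟨{a, b}, card_pair hab, fun g hg hS => ?_⟩
    have hga := hS a (by simp)
    have hgb := hS b (by simp)
    have hgc : g c = f c := by grind
    exact eq_of_eq_at_three hX hga hgb hgc

variable [DecidableEq X] [Fintype X] [Fintype Y] [DecidableEq Y]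

/-- With `a` the remaining point, `update (const u) c v` is the word `u u v` (constant when
`u = v`) and `update (const u) b v` with `u ≠ v` is the word `u v u`. -/
def occamFamily (Y : Type*) [Fintype Y] [DecidableEq Y] (b c : X) : Finset (X → Y) :=
  (univ : Finset (Y × Y)).image (fun p => update (const X p.1) c p.2) ∪
    (univ : Finset Y).offDiag.image (fun p => update (const X p.1) b p.2)

theorem eq_or_eq_of_mem_occamFamily (hab : a ≠ b) (hac : a ≠ c) (hbc : b ≠ c)
    {g : X → Y} (hg : g ∈ occamFamily Y b c) : g a = g b ∨ g a = g c := by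
  simp only [occamFamily, mem_union, mem_image] at hg
  rcases hg with ⟨p, -, rfl⟩ | ⟨p, -, rfl⟩
  · left
    simp [update_of_ne hac, update_of_ne hbc]
  · right
    simp [update_of_ne hab, update_of_ne hbc.symm]

theorem card_occamFamily (hab : a ≠ b) (hac : a ≠ c) (hbc : b ≠ c) :
    (occamFamily Y b c).card =
      Fintype.card Y * Fintype.card Y + Fintype.card Y * (Fintype.card Y - 1) := by
  have hinj_c : Injective (fun p : Y × Y => update (const X p.1) c p.2) := by
    intro p q h
    have ha := congrFun h a
    have hc := congrFun h c
    simp only [update_of_ne hac, update_self, const_apply] at ha hc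
    exact Prod.ext ha hc
  have hinj_b : Injective (fun p : Y × Y => update (const X p.1) b p.2) := by
    intro p q h
    have ha := congrFun h a
    have hb := congrFun h b
    simp only [update_of_ne hab, update_self, const_apply] at ha hb
    exact Prod.ext ha hb
  have hdisj : Disjoint ((univ : Finset (Y × Y)).image (fun p => update (const X p.1) c p.2))
      ((univ : Finset Y).offDiag.image (fun p => update (const X p.1) b p.2)) := by
    rw [disjoint_left]
    rintro _ hc hb
    obtain ⟨p, -, rfl⟩ := mem_image.mp hc
    obtain ⟨q, hq, h⟩ := mem_image.mp hb
    have ha := congrFun h a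
    have hb := congrFun h b
    simp [update_of_ne hab, update_of_ne hac, update_of_ne hbc] at ha hb
    exact (mem_offDiag.mp hq).2.2 (ha.trans hb.symm)
  rw [occamFamily, card_union_of_disjoint hdisj, card_image_of_injective _ hinj_c,
    card_image_of_injective _ hinj_b, offDiag_card]
  simp only [card_univ, Fintype.card_prod, Nat.mul_sub, mul_one]

end

theorem four_mul_choose_two_add (n : ℕ) :
    4 * n.choose 2 + n = n * n + n * (n - 1) := by
  have h : n.choose 2 * 2 = n * (n - 1) := by
    rw [Nat.choose_two_right, Nat.div_two_mul_two_of_even (Nat.even_mul_pred_self n)]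
  rw [Nat.mul_sub, mul_one] at h ⊢
  have := Nat.le_mul_self n
  omega

/-- `Occ(3,n,2) ≥ 4·C(n,2) + n`: there exists a set `A` of functions from a
3-element set `X` to an `n`-element set `Y`, of cardinality `4·C(n,2) + n`, such that each
`f ∈ A` is uniquely determined among elements of `A` by its values on some 2-element subset
of the domain. -/
theorem stmt8 {X Y : Type*} [Fintype X] [Fintype Y] [DecidableEq X] [DecidableEq Y]
    (n : ℕ) (hm : Fintype.card X = 3) (hn : Fintype.card Y = n) :
    ∃ A : Finset (X → Y), A.card = 4 * Nat.choose n 2 + n ∧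
      ∀ f ∈ A, ∃ S : Finset X, S.card = 2 ∧
        ∀ g ∈ A, (∀ x ∈ S, g x = f x) → g = f := by
  obtain ⟨a, b, c, hab, hac, hbc, huniv⟩ := card_eq_three.mp (card_univ.trans hm)
  have hX : ∀ x, x = a ∨ x = b ∨ x = c := fun x => by simpa [huniv] using mem_univ x
  refine ⟨occamFamily Y b c, ?_, fun f hf => ?_⟩
  · rw [card_occamFamily hab hac hbc, hn, four_mul_choose_two_add]
  · exact exists_occam_pair (A := (occamFamily Y b c : Set (X → Y))) hab hac hbc hX
      (fun _ hg => eq_or_eq_of_mem_occamFamily hab hac hbc hg) hf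
end

section
/- Occ(m,2,2) ≥ 2m for m ≥ 2: there exists a set A of 2m functions from an m-element set to a 2-element set such that each function in A is uniquely determined among elements of A by its values on some 2-element subset of the domain. (Construction for m = 5: the 10 words aaaaa, abaaa, abbaa, abbba, abbbb, bbbbb, babbb, baabb, baaab, baaaa, each Occam on a suitable pair of positions.) -/
/-!
For `n ≥ 2` take, on positions `0, …, n-1`, the word `w(c, k)` that equals `c` outside the
interval `[1, k]` and `¬c` on it (`c : Bool`, `k < n`): `aaaaa, abaaa, …, abbbb` and their
complements when `n = 5`. The word `w(c, k)` is pinned down among these `2n` words by its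
values at `{k, k+1}`, or at `{n-1, 0}` when `k = n-1`: a word agreeing there must have the
same colour `c` at the positions outside the interval and an interval ending exactly at `k`.
-/

theorem Finset.exists_card_eq_of_determining {P X β : Type*} [Fintype P] (w : P → X → β)
    (k : ℕ) (hw : ∀ p, ∃ S : Finset X, S.card = k ∧ ∀ q, (∀ x ∈ S, w q x = w p x) → q = p) :
    ∃ A : Finset (X → β), A.card = Fintype.card P ∧
      ∀ f ∈ A, ∃ S : Finset X, S.card = k ∧ ∀ g ∈ A, (∀ x ∈ S, g x = f x) → g = f := by
  classical
  have hinj : Function.Injective w := fun q p hqp => by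
    obtain ⟨S, -, hS⟩ := hw p
    exact hS q fun x _ => congrFun hqp x
  refine ⟨univ.image w, by rw [card_image_of_injective _ hinj, card_univ], ?_⟩
  simp only [mem_image, mem_univ, true_and, forall_exists_index, forall_apply_eq_imp_iff]
  intro p
  obtain ⟨S, hcard, hS⟩ := hw p
  exact ⟨S, hcard, fun q hq => congrArg w (hS q hq)⟩

theorem Equiv.exists_determining_comp {P X Y β : Type*} (e : X ≃ Y) (w : P → Y → β) (k : ℕ)
    (hw : ∀ p, ∃ S : Finset Y, S.card = k ∧ ∀ q, (∀ y ∈ S, w q y = w p y) → q = p) (p : P) :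
    ∃ S : Finset X, S.card = k ∧ ∀ q, (∀ x ∈ S, w q (e x) = w p (e x)) → q = p := by
  obtain ⟨S, hcard, hS⟩ := hw p
  refine ⟨S.map e.symm.toEmbedding, by rw [Finset.card_map, hcard], fun q hq => hS q fun y hy => ?_⟩
  simpa using hq (e.symm y) (Finset.mem_map_of_mem _ hy)

def intervalWord {n : ℕ} (p : Bool × Fin n) (i : Fin n) : Bool :=
  xor p.1 (decide (1 ≤ (i : ℕ) ∧ (i : ℕ) ≤ p.2))

theorem eq_of_intervalWord_agree_self_succ {n : ℕ} {p q : Bool × Fin n} (j : Fin n)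
    (hj : (j : ℕ) = p.2 + 1) (hk : intervalWord q p.2 = intervalWord p p.2)
    (hj' : intervalWord q j = intervalWord p j) : q = p := by
  obtain ⟨c, k⟩ := p
  obtain ⟨c', k'⟩ := q
  simp only [intervalWord, hj] at hk hj'
  cases c <;> cases c' <;>
    simp only [Bool.false_xor, Bool.true_xor, ← decide_not, decide_eq_decide, Prod.mk.injEq,
      Fin.ext_iff, Bool.true_eq_false, Bool.false_eq_true, true_and, false_and] at hk hj' ⊢ <;>
    omega

theorem eq_of_intervalWord_agree_last_zero {n : ℕ} (hn : 2 ≤ n) {p q : Bool × Fin n}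
    (hk : (p.2 : ℕ) + 1 = n) (hlast : intervalWord q p.2 = intervalWord p p.2)
    (hzero : intervalWord q ⟨0, by omega⟩ = intervalWord p ⟨0, by omega⟩) : q = p := by
  obtain ⟨c, k⟩ := p
  obtain ⟨c', k'⟩ := q
  have := k'.isLt
  dsimp only at hk
  simp only [intervalWord] at hlast hzero
  cases c <;> cases c' <;>
    simp only [Bool.false_xor, Bool.true_xor, ← decide_not, decide_eq_decide, Prod.mk.injEq,
      Fin.ext_iff, Bool.true_eq_false, Bool.false_eq_true, true_and, false_and] at hlast hzero ⊢ <;>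
    omega

theorem exists_card_two_determining_intervalWord {n : ℕ} (hn : 2 ≤ n) (p : Bool × Fin n) :
    ∃ S : Finset (Fin n), S.card = 2 ∧
      ∀ q, (∀ i ∈ S, intervalWord q i = intervalWord p i) → q = p := by
  by_cases hk : (p.2 : ℕ) + 1 < n
  · refine ⟨{p.2, ⟨p.2 + 1, hk⟩}, Finset.card_pair (by simp [Fin.ext_iff]), fun q hq => ?_⟩
    exact eq_of_intervalWord_agree_self_succ ⟨p.2 + 1, hk⟩ rfl (hq _ (by simp)) (hq _ (by simp))
  · refine ⟨{p.2, ⟨0, by omega⟩}, Finset.card_pair ?_, fun q hq => ?_⟩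
    · simp only [ne_eq, Fin.ext_iff]
      omega
    exact eq_of_intervalWord_agree_last_zero hn (by omega) (hq _ (by simp)) (hq _ (by simp))

theorem stmt9_general {X : Type*} [Fintype X] (m : ℕ)
    (hm : Fintype.card X = m) (h2 : 2 ≤ m) :
    ∃ A : Finset (X → Bool), A.card = 2 * m ∧
      ∀ f ∈ A, ∃ S : Finset X, S.card = 2 ∧
        ∀ g ∈ A, (∀ x ∈ S, g x = f x) → g = f := by
  subst hm
  obtain ⟨A, hcard, hA⟩ := Finset.exists_card_eq_of_determining _ 2
    ((Fintype.equivFin X).exists_determining_comp _ 2 (exists_card_two_determining_intervalWord h2))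
  refine ⟨A, ?_, hA⟩
  rw [hcard, Fintype.card_prod, Fintype.card_bool, Fintype.card_fin]

/-- `Occ(m,2,2) ≥ 2m` for `m ≥ 2`: there exists a set `A` of `2m` functions
from an `m`-element set `X` to a 2-element alphabet (`Bool`) such that each function in `A`
is uniquely determined among elements of `A` by its values on some 2-element subset of the
domain. -/
theorem stmt9 {X : Type*} [Fintype X] [DecidableEq X] (m : ℕ)
    (hm : Fintype.card X = m) (h2 : 2 ≤ m) :
    ∃ A : Finset (X → Bool), A.card = 2 * m ∧
      ∀ f ∈ A, ∃ S : Finset X, S.card = 2 ∧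
        ∀ g ∈ A, (∀ x ∈ S, g x = f x) → g = f :=
  stmt9_general m hm h2
end

section
/- Let G be a group and S ⊆ G. The fusion set F_S of S with respect to the poset (A_G, ⊆) of characteristic functions of subgroups ordered by inclusion equals {χ_{⟨R⟩} | R ⊆ S}, i.e., a subgroup H's characteristic function is Occam on S (H is the smallest subgroup K with K ∩ S = H ∩ S) if and only if H is generated by some subset of S. -/
namespace Subgroup

variable {G : Type*} [Group G]

theorem mem_closure_inter_iff {S : Set G} {H : Subgroup G} {g : G} (hg : g ∈ S) :
    g ∈ closure (S ∩ H) ↔ g ∈ H :=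
  ⟨fun h => (closure_le H).2 Set.inter_subset_right h, fun h => subset_closure ⟨hg, h⟩⟩

theorem closure_le_of_forall_mem_imp {R S : Set G} (hRS : R ⊆ S) {K : Subgroup G}
    (hK : ∀ g ∈ S, g ∈ closure R → g ∈ K) : closure R ≤ K :=
  (closure_le K).2 fun r hr => hK r (hRS hr) (subset_closure hr)

end Subgroup

/-- For a group `G` and `S ⊆ G`, the fusion set of `S` with respect to the
poset of subgroups ordered by inclusion equals `{⟨R⟩ | R ⊆ S}`: a subgroup `H` is the least
element of `{K | K ∩ S = H ∩ S}` if and only if `H` is generated by some subset of `S`. -/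
theorem stmt17 {G : Type*} [Group G] (S : Set G) (H : Subgroup G) :
    IsLeast {K : Subgroup G | ∀ g ∈ S, (g ∈ K ↔ g ∈ H)} H ↔
    ∃ R ⊆ S, Subgroup.closure R = H := by
  constructor
  · rintro ⟨-, hleast⟩
    refine ⟨S ∩ H, Set.inter_subset_left, le_antisymm ?_ ?_⟩
    · exact (Subgroup.closure_le H).2 Set.inter_subset_right
    · exact hleast fun g hg => Subgroup.mem_closure_inter_iff hg
  · rintro ⟨R, hRS, rfl⟩
    exact ⟨fun _ _ => Iff.rfl, fun K hK => Subgroup.closure_le_of_forall_mem_imp hRS fun g hg => (hK g hg).2⟩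
end

section
/- If G is a group of finite rank n, then F₀ = 2ⁿ, where F₀ = min{ |F_S| : χ_G ∈ F_S } is the fusion number of the maximal element of (A_G, ⊆). Equivalently, the minimum over generating sets S of G of the number of distinct subgroups of G generated by subsets of S equals 2^{rank(G)}. -/
/-!
Call a set `T` of elements irredundant if no `s ∈ T` lies in `⟨T \ {s}⟩`. For such `T`, the map
`R ↦ ⟨R⟩` is injective on subsets of `T`: if `⟨A⟩ ≤ ⟨B⟩` with `A, B ⊆ T` and `s ∈ A \ B`, then
`s ∈ ⟨B⟩ ≤ ⟨T \ {s}⟩`. Hence `T` yields exactly `2 ^ |T|` subgroups. Any generating set `S` of a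
finitely generated group contains a finite generating subset, and shrinking it to a minimal one
gives an irredundant generating subset of `S`, of size at least `rank G`; so `S` yields at least
`2 ^ rank G` subgroups. A generating set of size `rank G` yields at most `2 ^ rank G`.
-/

open Set

theorem Set.Finite.encard_powerset {α : Type*} {s : Set α} (hs : s.Finite) :
    (𝒫 s).encard = 2 ^ s.ncard := by
  rw [← hs.powerset.cast_ncard_eq, ncard_powerset s hs]
  push_cast
  rfl

namespace Subgroup

variable {G : Type*} [Group G]

def Irredundant (T : Set G) : Prop :=
  ∀ s ∈ T, s ∉ closure (T \ {s})

theorem exists_finset_subset_mem_closure {S : Set G} {x : G} (hx : x ∈ closure S) :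
    ∃ T : Finset G, ↑T ⊆ S ∧ x ∈ closure (T : Set G) := by
  classical
  induction hx using closure_induction with
  | mem y hy => exact ⟨{y}, by simpa using hy, subset_closure (by simp)⟩
  | one => exact ⟨∅, by simp, one_mem _⟩
  | mul x y _ _ ihx ihy =>
    obtain ⟨A, hAS, hA⟩ := ihx
    obtain ⟨B, hBS, hB⟩ := ihy
    refine ⟨A ∪ B, by simpa using ⟨hAS, hBS⟩, mul_mem ?_ ?_⟩
    · exact closure_mono (by simp) hA
    · exact closure_mono (by simp) hB
  | inv x _ ih =>
    obtain ⟨A, hAS, hA⟩ := ih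
    exact ⟨A, hAS, inv_mem hA⟩

theorem exists_finset_subset_closure_eq_top [Group.FG G] {S : Set G} (hS : closure S = ⊤) :
    ∃ T : Finset G, ↑T ⊆ S ∧ closure (T : Set G) = ⊤ := by
  classical
  obtain ⟨F, hF⟩ := Group.fg_def.mp ‹Group.FG G›
  choose T hTS hT using fun x : G => exists_finset_subset_mem_closure (hS ▸ mem_top x)
  refine ⟨F.biUnion T, by simpa using fun x _ => hTS x, eq_top_iff.mpr ?_⟩
  rw [← hF, closure_le]
  intro x hx
  exact closure_mono (Finset.coe_subset.mpr (Finset.subset_biUnion_of_mem T hx)) (hT x)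

theorem closure_diff_singleton_of_mem_closure {T : Set G} {s : G} (hs : s ∈ closure (T \ {s})) :
    closure (T \ {s}) = closure T := by
  refine (closure_mono sdiff_subset).antisymm ((closure_le _).mpr fun t ht => ?_)
  by_cases hts : t = s
  · exact hts ▸ hs
  · exact subset_closure ⟨ht, hts⟩

theorem exists_irredundant_subset_closure_eq (T : Finset G) :
    ∃ U ⊆ T, closure (U : Set G) = closure T ∧ Irredundant (U : Set G) := by
  classical
  obtain ⟨U, hUT, hU⟩ := exists_minimal_le_of_wellFoundedLT
    (fun U : Finset G => closure (U : Set G) = closure T) T rfl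
  refine ⟨U, hUT, hU.prop, fun s hs hsU => ?_⟩
  have hclosure : closure ((U.erase s : Finset G) : Set G) = closure T := by
    rw [Finset.coe_erase, closure_diff_singleton_of_mem_closure hsU, hU.prop]
  exact U.notMem_erase s (hU.le_of_le hclosure (U.erase_subset s) hs)

theorem Irredundant.subset_of_closure_le {T A B : Set G} (hT : Irredundant T) (hA : A ⊆ T)
    (hB : B ⊆ T) (h : closure A ≤ closure B) : A ⊆ B := by
  intro s hsA
  by_contra hsB
  have hBT : B ⊆ T \ {s} := fun t ht => ⟨hB ht, by rintro rfl; exact hsB ht⟩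
  exact hT s (hA hsA) (closure_mono hBT (h (subset_closure hsA)))

theorem Irredundant.injOn_closure {T : Set G} (hT : Irredundant T) : InjOn closure (𝒫 T) :=
  fun _ hA _ hB h =>
    (hT.subset_of_closure_le hA hB h.le).antisymm (hT.subset_of_closure_le hB hA h.ge)

theorem Irredundant.encard_image_closure_powerset {T : Set G} (hT : Irredundant T)
    (hfin : T.Finite) : (closure '' 𝒫 T).encard = 2 ^ T.ncard :=
  hT.injOn_closure.encard_image.trans hfin.encard_powerset

theorem encard_image_closure_powerset_le {T : Set G} (hT : T.Finite) :
    (closure '' 𝒫 T).encard ≤ 2 ^ T.ncard :=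
  (encard_image_le _ _).trans_eq hT.encard_powerset

theorem two_pow_rank_le_encard_image_closure_powerset [Group.FG G] {S : Set G}
    (hS : closure S = ⊤) : 2 ^ Group.rank G ≤ (closure '' 𝒫 S).encard := by
  obtain ⟨T, hTS, hT⟩ := exists_finset_subset_closure_eq_top hS
  obtain ⟨U, hUT, hU, hirr⟩ := exists_irredundant_subset_closure_eq T
  have hUS : (U : Set G) ⊆ S := (Finset.coe_subset.mpr hUT).trans hTS
  calc (2 : ℕ∞) ^ Group.rank G ≤ 2 ^ U.card :=
        pow_le_pow_right₀ one_le_two (Group.rank_le (hU.trans hT))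
    _ = (closure '' 𝒫 (U : Set G)).encard := by
        rw [hirr.encard_image_closure_powerset U.finite_toSet, ncard_coe_finset]
    _ ≤ (closure '' 𝒫 S).encard := encard_mono (image_mono (powerset_mono.mpr hUS))

end Subgroup

/-- If `G` is a group of finite rank `n`, then `F₀ = 2ⁿ`: the minimum, over
generating sets `S` of `G`, of the number of distinct subgroups of `G` generated by subsets
of `S`, equals `2 ^ rank(G)`. -/
theorem stmt18 (G : Type*) [Group G] [Group.FG G] :
    sInf {c : ℕ∞ | ∃ S : Set G, Subgroup.closure S = ⊤ ∧
      {H : Subgroup G | ∃ R ⊆ S, Subgroup.closure R = H}.encard = c} =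
    2 ^ Group.rank G := by
  change sInf {c : ℕ∞ | ∃ S : Set G, Subgroup.closure S = ⊤ ∧
    (Subgroup.closure '' 𝒫 S).encard = c} = _
  obtain ⟨T, hTcard, hT⟩ := Group.rank_spec G
  refine le_antisymm (sInf_le ⟨T, hT, le_antisymm ?_ ?_⟩) (le_sInf ?_)
  · simpa [hTcard] using Subgroup.encard_image_closure_powerset_le T.finite_toSet
  · exact Subgroup.two_pow_rank_le_encard_image_closure_powerset hT
  · rintro c ⟨S, hS, rfl⟩
    exact Subgroup.two_pow_rank_le_encard_image_closure_powerset hS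
end
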